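/- Let β be a Pisot number satisfying Property (F) and α a conjugate of β. For every x ∈ Z[β^{-1}] with x > 0, the conjugate x' ∈ Z[α^{-1}] has a finite α-adic expansion; namely if the (finite) β-expansion of x is x = Σ_{i=-j}^{k} x_i β^i with admissible digits x_i ∈ {0,…,⌊β⌋}, then x' = Σ_{i=-j}^{k} x_i α^i. -/

import Mathlib

/-!
By Property (F), `x / β ^ k` lies in `[0, 1)` and its orbit under the β-transformation reaches `0`,
so the greedy digits `⌊β T^j (x / β ^ k)⌋` give a finite admissible expansion `x = ∑ d_i β^i`.
The integer Laurent polynomial `∑ (c_i - d_i) X^i` vanishes at `β`; after clearing denominators it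
is divisible by `minpoly ℤ β` (Gauss's lemma), so it also vanishes at the conjugate `α`, i.e.
`∑ d_i α^i = ∑ c_i α^i`.
-/

/-- The β-transformation T_β(x) = {βx}. -/
noncomputable def betaMap (β : ℝ) : ℝ → ℝ := fun x => Int.fract (β * x)

/-- β is a Pisot number. -/
def IsPisot (β : ℝ) : Prop :=
  1 < β ∧ IsIntegral ℤ β ∧
    ∀ z : ℂ, Polynomial.aeval z (minpoly ℤ β) = 0 → z ≠ (β : ℂ) → ‖z‖ < 1

/-- x ≥ 0 has a finite (greedy) β-expansion: for some k with x/β^k ∈ [0,1),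
the β-transformation iteration starting from x/β^k terminates at 0. -/
def HasFiniteBetaExpansion (β : ℝ) (x : ℝ) : Prop :=
  ∃ k N : ℕ, x / β ^ k ∈ Set.Ico (0 : ℝ) 1 ∧ (betaMap β)^[N] (x / β ^ k) = 0

open Polynomial

theorem betaMap_mem_Ico (β x : ℝ) : betaMap β x ∈ Set.Ico 0 1 :=
  ⟨Int.fract_nonneg _, Int.fract_lt_one _⟩

theorem betaMap_iterate_mem_Ico {β y : ℝ} (hy : y ∈ Set.Ico 0 1) (n : ℕ) :
    (betaMap β)^[n] y ∈ Set.Ico 0 1 := by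
  cases n with
  | zero => exact hy
  | succ n => rw [Function.iterate_succ_apply']; exact betaMap_mem_Ico _ _

theorem mul_eq_floor_add_betaMap (β x : ℝ) : β * x = ⌊β * x⌋ + betaMap β x :=
  (Int.floor_add_fract _).symm

theorem betaMap_iterate_eq_zero_of_le {β y : ℝ} {N n : ℕ} (hN : (betaMap β)^[N] y = 0)
    (hn : N ≤ n) : (betaMap β)^[n] y = 0 := by
  obtain ⟨j, rfl⟩ := Nat.exists_eq_add_of_le hn
  rw [add_comm, Function.iterate_add_apply, hN]
  exact Function.iterate_fixed (by simp [betaMap]) j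

/-- The greedy digits of `β ^ k * y` for `y ∈ [0, 1)`: position `k - 1 - j` carries the `j`-th
digit `⌊β T^j y⌋` of `y`. -/
noncomputable def betaDigits (β : ℝ) (k : ℤ) (y : ℝ) (i : ℤ) : ℤ :=
  if i < k then ⌊β * (betaMap β)^[(k - 1 - i).toNat] y⌋ else 0

theorem tsum_subtype_lt_eq_sum_Ico {M : Type*} [AddCommMonoid M] [TopologicalSpace M]
    {f : ℤ → M} {a b : ℤ} (hf : ∀ i ∉ Set.Ico a b, f i = 0) (n : ℤ) :
    ∑' i : {i : ℤ // i < n}, f i = ∑ i ∈ Finset.Ico a (min n b), f i := by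
  refine (tsum_subtype {i | i < n} f).trans ?_
  rw [tsum_eq_sum (s := Finset.Ico a (min n b))]
  · refine Finset.sum_congr rfl fun i hi => Set.indicator_of_mem ?_ f
    simp only [Finset.mem_Ico, lt_min_iff] at hi
    exact hi.2.1
  · intro i hi
    simp only [Finset.mem_Ico, lt_min_iff, not_and, not_lt] at hi
    by_cases hin : i < n
    · simp [hin, hf i (by grind)]
    · exact Set.indicator_of_notMem (s := {i | i < n}) hin f

section betaDigits

variable {β y : ℝ} {N : ℕ}

theorem betaDigits_mem_Icc (hβ : 0 < β) (hy : y ∈ Set.Ico 0 1) (k i : ℤ) :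
    betaDigits β k y i ∈ Set.Icc 0 ⌊β⌋ := by
  unfold betaDigits
  split_ifs
  · obtain ⟨h0, h1⟩ := betaMap_iterate_mem_Ico (β := β) hy (k - 1 - i).toNat
    exact ⟨Int.floor_nonneg.2 (by positivity), Int.floor_le_floor (by nlinarith)⟩
  · exact ⟨le_rfl, Int.floor_nonneg.2 hβ.le⟩

theorem betaDigits_eq_zero (hN : (betaMap β)^[N] y = 0) {k i : ℤ} (hi : i ∉ Set.Ico (k - N) k) :
    betaDigits β k y i = 0 := by
  unfold betaDigits
  split_ifs with hik
  · rw [betaMap_iterate_eq_zero_of_le hN (by grind), mul_zero, Int.floor_zero]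
  · rfl

theorem betaDigits_support_finite (hN : (betaMap β)^[N] y = 0) (k : ℤ) :
    (Function.support (betaDigits β k y)).Finite :=
  (Set.finite_Ico (k - N) k).subset fun _ hi => by_contra fun h => hi (betaDigits_eq_zero hN h)

theorem sum_Ico_betaDigits (hβ : β ≠ 0) (hN : (betaMap β)^[N] y = 0) {k n : ℤ} (hn : n ≤ k) :
    ∑ i ∈ Finset.Ico (k - N) n, (betaDigits β k y i : ℝ) * β ^ i =
      β ^ n * (betaMap β)^[(k - n).toNat] y := by
  have hlow : ∀ m ≤ k - N, ∑ i ∈ Finset.Ico (k - N) m, (betaDigits β k y i : ℝ) * β ^ i =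
      β ^ m * (betaMap β)^[(k - m).toNat] y := fun m hm => by
    rw [Finset.Ico_eq_empty_of_le hm, Finset.sum_empty,
      betaMap_iterate_eq_zero_of_le hN (by omega), mul_zero]
  rcases le_or_gt n (k - N) with hnN | hnN
  · exact hlow n hnN
  replace hnN := hnN.le
  -- Upward from `k - N`, where the orbit has vanished; each step peels off one digit.
  induction n, hnN using Int.leInduction with
  | base => exact hlow _ le_rfl
  | succ n hNn ih =>
    obtain ⟨m, hm, hm'⟩ : ∃ m : ℕ, (k - 1 - n).toNat = m ∧ (k - n).toNat = m + 1 :=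
      ⟨_, rfl, by omega⟩
    rw [← Finset.insert_Ico_right_eq_Ico_add_one hNn, Finset.sum_insert (by simp),
      ih (by omega), betaDigits, if_pos (by omega), show k - (n + 1) = k - 1 - n by ring, hm, hm',
      Function.iterate_succ_apply', zpow_add_one₀ hβ]
    linear_combination -β ^ n * mul_eq_floor_add_betaMap β ((betaMap β)^[m] y)

theorem hasSum_betaDigits (hβ : β ≠ 0) (hN : (betaMap β)^[N] y = 0) (k : ℤ) :
    HasSum (fun i => (betaDigits β k y i : ℝ) * β ^ i) (β ^ k * y) := by
  have hsum := sum_Ico_betaDigits hβ hN (le_refl k)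
  rw [sub_self, Int.toNat_zero, Function.iterate_zero_apply] at hsum
  rw [← hsum]
  refine hasSum_sum_of_ne_finset_zero fun i hi => ?_
  rw [betaDigits_eq_zero hN (by simpa using hi), Int.cast_zero, zero_mul]

theorem tsum_betaDigits_lt_zpow (hβ : 1 < β) (hy : y ∈ Set.Ico 0 1) (hN : (betaMap β)^[N] y = 0)
    (k n : ℤ) : ∑' i : {i : ℤ // i < n}, (betaDigits β k y i : ℝ) * β ^ (i : ℤ) < β ^ n := by
  have hβ0 : 0 < β := one_pos.trans hβ
  have hvanish : ∀ i ∉ Set.Ico (k - N) k, (betaDigits β k y i : ℝ) * β ^ i = 0 := fun i hi => by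
    rw [betaDigits_eq_zero hN hi, Int.cast_zero, zero_mul]
  rw [tsum_subtype_lt_eq_sum_Ico hvanish, sum_Ico_betaDigits hβ0.ne' hN (min_le_right n k)]
  calc β ^ min n k * (betaMap β)^[(k - min n k).toNat] y < β ^ min n k :=
        mul_lt_of_lt_one_right (zpow_pos hβ0 _) (betaMap_iterate_mem_Ico hy _).2
    _ ≤ β ^ n := zpow_le_zpow_right₀ hβ.le (min_le_left n k)

end betaDigits

theorem HasFiniteBetaExpansion.exists_greedy_digits {β x : ℝ} (hβ : 1 < β)
    (hx : HasFiniteBetaExpansion β x) :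
    ∃ d : ℤ → ℤ,
      (∀ i, 0 ≤ d i ∧ d i ≤ ⌊β⌋) ∧
      (Function.support d).Finite ∧
      HasSum (fun i : ℤ => (d i : ℝ) * β ^ i) x ∧
      (∀ n : ℤ, ∑' i : {i : ℤ // i < n}, (d i : ℝ) * β ^ (i : ℤ) < β ^ n) := by
  obtain ⟨k, N, hy, hN⟩ := hx
  have hβ0 : 0 < β := one_pos.trans hβ
  refine ⟨betaDigits β k (x / β ^ k), betaDigits_mem_Icc hβ0 hy k,
    betaDigits_support_finite hN k, ?_, tsum_betaDigits_lt_zpow hβ hy hN k⟩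
  simpa [mul_div_cancel₀ x (pow_ne_zero k hβ0.ne')] using hasSum_betaDigits hβ0.ne' hN k

section Conjugate

variable {K L : Type*} [Field K] [Field L] [CharZero L] {β : K} {α : L}

theorem ne_zero_of_aeval_minpoly_eq_zero (hβ : IsIntegral ℤ β) (hβ0 : β ≠ 0)
    (hα : aeval α (minpoly ℤ β) = 0) : α ≠ 0 := by
  rintro rfl
  have hX : X ∣ minpoly ℤ β := by
    rw [X_dvd_iff, ← Int.cast_eq_zero (α := L)]
    simpa [aeval_def, eval₂_at_zero] using hα
  obtain ⟨q, hq⟩ := (irreducible_X.associated_of_dvd (minpoly.irreducible hβ) hX).symm.dvd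
  have hβX := congrArg (aeval β) hq
  rw [aeval_X, map_mul, minpoly.aeval, zero_mul] at hβX
  exact hβ0 hβX

theorem aeval_sum_C_mul_X_pow_toNat_sub {F : Type*} [Field F] {z : F} (hz : z ≠ 0)
    {s : Finset ℤ} {m : ℤ} (hm : ∀ i ∈ s, m ≤ i) (e : ℤ → ℤ) :
    aeval z (∑ i ∈ s, C (e i) * X ^ (i - m).toNat) = z ^ (-m) * ∑ i ∈ s, (e i : F) * z ^ i := by
  rw [map_sum, Finset.mul_sum]
  refine Finset.sum_congr rfl fun i hi => ?_
  rw [map_mul, aeval_C, aeval_X_pow, algebraMap_int_eq, eq_intCast, ← zpow_natCast,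
    Int.toNat_of_nonneg (sub_nonneg.2 (hm i hi)), sub_eq_neg_add, zpow_add₀ hz]
  ring

theorem sum_intCast_mul_zpow_eq_zero_of_aeval_minpoly [CharZero K] (hβ : IsIntegral ℤ β)
    (hβ0 : β ≠ 0) (hα : aeval α (minpoly ℤ β) = 0) (s : Finset ℤ) (e : ℤ → ℤ)
    (h : ∑ i ∈ s, (e i : K) * β ^ i = 0) : ∑ i ∈ s, (e i : L) * α ^ i = 0 := by
  obtain ⟨m, hm⟩ : ∃ m : ℤ, ∀ i ∈ s, m ≤ i := s.bddBelow
  have hα0 := ne_zero_of_aeval_minpoly_eq_zero hβ hβ0 hα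
  obtain ⟨q, hq⟩ := minpoly.isIntegrallyClosed_dvd hβ
    (p := ∑ i ∈ s, C (e i) * X ^ (i - m).toNat)
    (by rw [aeval_sum_C_mul_X_pow_toNat_sub hβ0 hm, h, mul_zero])
  have hαP := congrArg (aeval α) hq
  rw [aeval_sum_C_mul_X_pow_toNat_sub hα0 hm, map_mul, hα, zero_mul] at hαP
  exact (mul_eq_zero.1 hαP).resolve_left (zpow_ne_zero _ hα0)

theorem hasSum_zpow_conjugate [CharZero K] [TopologicalSpace K] [T2Space K] [TopologicalSpace L]
    (hβ : IsIntegral ℤ β) (hβ0 : β ≠ 0) (hα : aeval α (minpoly ℤ β) = 0) {c d : ℤ → ℤ}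
    (hc : (Function.support c).Finite) (hd : (Function.support d).Finite) {x : K}
    (hcx : HasSum (fun i => (c i : K) * β ^ i) x) (hdx : HasSum (fun i => (d i : K) * β ^ i) x) :
    HasSum (fun i => (d i : L) * α ^ i) (∑' i, (c i : L) * α ^ i) := by
  set s := hc.toFinset ∪ hd.toFinset
  have hcds : ∀ i ∉ s, c i = 0 ∧ d i = 0 := fun i hi => by simpa [s] using hi
  have hcs : ∀ i ∉ s, (c i : K) * β ^ i = 0 := fun i hi => by simp [(hcds i hi).1]
  have hds : ∀ i ∉ s, (d i : K) * β ^ i = 0 := fun i hi => by simp [(hcds i hi).2]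
  have hβs : ∑ i ∈ s, ((c - d) i : K) * β ^ i = 0 := by
    simp only [Pi.sub_apply, Int.cast_sub, sub_mul, Finset.sum_sub_distrib,
      (hasSum_sum_of_ne_finset_zero hcs).unique hcx, (hasSum_sum_of_ne_finset_zero hds).unique hdx,
      sub_self]
  have hαs := sum_intCast_mul_zpow_eq_zero_of_aeval_minpoly hβ hβ0 hα s (c - d) hβs
  simp only [Pi.sub_apply, Int.cast_sub, sub_mul, Finset.sum_sub_distrib, sub_eq_zero] at hαs
  rw [tsum_eq_sum fun i hi => by simp [(hcds i hi).1], hαs]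
  exact hasSum_sum_of_ne_finset_zero fun i hi => by simp [(hcds i hi).2]

end Conjugate

theorem conjugate_has_finite_expansion_general (β : ℝ) (α : ℂ)
    (hβ : IsPisot β)
    (hroot : Polynomial.aeval α (minpoly ℤ β) = 0)
    (hF : ∀ y : ℝ, y ∈ Subring.closure ({β, β⁻¹} : Set ℝ) ↔
      HasFiniteBetaExpansion β |y|)
    (x : ℝ) (hx : x ∈ Subring.closure ({β, β⁻¹} : Set ℝ)) (hxpos : 0 < x)
    (c : ℤ → ℤ) (hcfin : (Function.support c).Finite)
    (hc : HasSum (fun i : ℤ => (c i : ℝ) * β ^ i) x) :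
    ∃ d : ℤ → ℤ,
      (∀ i, 0 ≤ d i ∧ d i ≤ ⌊β⌋) ∧
      (Function.support d).Finite ∧
      HasSum (fun i : ℤ => (d i : ℝ) * β ^ i) x ∧
      (∀ n : ℤ, ∑' i : {i : ℤ // i < n}, (d i : ℝ) * β ^ (i : ℤ) < β ^ n) ∧
      HasSum (fun i : ℤ => (d i : ℂ) * α ^ i) (∑' i : ℤ, (c i : ℂ) * α ^ i) := by
  obtain ⟨hβ1, hint, -⟩ := hβ
  have hfin : HasFiniteBetaExpansion β x := abs_of_pos hxpos ▸ (hF x).1 hx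
  obtain ⟨d, hdig, hdfin, hdx, htail⟩ := hfin.exists_greedy_digits hβ1
  exact ⟨d, hdig, hdfin, hdx, htail,
    hasSum_zpow_conjugate hint (one_pos.trans hβ1).ne' hroot hcfin hdfin hc hdx⟩

/-- Let β be a Pisot number satisfying Property (F)
(Fin(β) = ℤ[β⁻¹]) and α a conjugate of β.  For every x ∈ ℤ[β⁻¹] with x > 0
(here presented by an integer digit representation c, so that its conjugate is
x' = Σ c_i α^i), the conjugate x' has a finite α-adic expansion: if the finite
greedy β-expansion of x is x = Σ_{i=-j}^k d_i β^i with digits d_i ∈ {0,…,⌊β⌋}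
(greedy: every tail Σ_{i<n} d_i β^i is < β^n), then x' = Σ_{i=-j}^k d_i α^i. -/
theorem conjugate_has_finite_expansion (β : ℝ) (α : ℂ)
    (hβ : IsPisot β)
    (hroot : Polynomial.aeval α (minpoly ℤ β) = 0) (hne : α ≠ (β : ℂ))
    (hF : ∀ y : ℝ, y ∈ Subring.closure ({β, β⁻¹} : Set ℝ) ↔
      HasFiniteBetaExpansion β |y|)
    (x : ℝ) (hx : x ∈ Subring.closure ({β, β⁻¹} : Set ℝ)) (hxpos : 0 < x)
    (c : ℤ → ℤ) (hcfin : (Function.support c).Finite)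
    (hc : HasSum (fun i : ℤ => (c i : ℝ) * β ^ i) x) :
    ∃ d : ℤ → ℤ,
      (∀ i, 0 ≤ d i ∧ d i ≤ ⌊β⌋) ∧
      (Function.support d).Finite ∧
      HasSum (fun i : ℤ => (d i : ℝ) * β ^ i) x ∧
      (∀ n : ℤ, ∑' i : {i : ℤ // i < n}, (d i : ℝ) * β ^ (i : ℤ) < β ^ n) ∧
      HasSum (fun i : ℤ => (d i : ℂ) * α ^ i) (∑' i : ℤ, (c i : ℂ) * α ^ i) :=
  conjugate_has_finite_expansion_general β α hβ hroot hF x hx hxpos c hcfin hc
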